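/- Let S̃ : (0,∞) → ℝ be continuous with S̃(p) > 0 for all p > 0, suppose S̃(p)/p³ → L as p → 0⁺ for some constant L ∈ (0,∞), and suppose there exist c > 0 and R > 0 with S̃(p) ≥ c·p for all p ≥ R. For ν > 0 define p_ν = (∫₀^∞ e^{−S̃(ξ)/ν} ξ dξ) / (∫₀^∞ e^{−S̃(ξ)/ν} dξ). Then ν^{−1/3} · p_ν → L^{−1/3} · Γ(2/3)/Γ(1/3) as ν → 0⁺; in particular p_ν = const · ν^{1/3} (1 + o(1)). -/

import Mathlib

/-!
Substituting `ξ = ν^{1/n} u` turns the `q`-th moment `∫ ξ^q e^{-S(ξ)/ν} dξ` into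
`ν^{(q+1)/n} ∫ u^q e^{-S(ν^{1/n} u)/ν} du`, whose integrand tends to `u^q e^{-L uⁿ}`.
Since `S p ≥ A pⁿ` or `S p ≥ A p` for every `p > 0` (from the limit near `0`, a positive
minimum on a compact middle range, and linear growth at infinity), for `ν ≤ 1` the integrand is
dominated by `u^q (e^{-A uⁿ} + e^{-A u})`. Dominated convergence and
`∫ u^q e^{-L uⁿ} du = L^{-(q+1)/n} Γ((q+1)/n) / n` give the asymptotics of every moment, and
the quotient of the first two is the claim for `n = 3`.
-/

open MeasureTheory Filter Set Real Topology

theorem exists_pos_mul_pow_le_or_mul_le {S : ℝ → ℝ} {n : ℕ} {L c R : ℝ}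
    (hcont : ContinuousOn S (Ioi 0)) (hpos : ∀ p, 0 < p → 0 < S p) (hL : 0 < L)
    (hlim : Tendsto (fun p => S p / p ^ n) (𝓝[>] 0) (𝓝 L))
    (hc : 0 < c) (hcR : ∀ p ≥ R, c * p ≤ S p) :
    ∃ A > 0, ∀ p > 0, A * p ^ n ≤ S p ∨ A * p ≤ S p := by
  obtain ⟨δ, hδ : 0 < δ, hδS⟩ := mem_nhdsGT_iff_exists_Ioc_subset.mp
    (hlim.eventually (eventually_ge_nhds (half_lt_self hL)))
  set R' := max R δ
  have hR' : 0 < R' := hδ.trans_le (le_max_right R δ)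
  obtain ⟨x₀, hx₀, hmin⟩ := isCompact_Icc.exists_isMinOn
    (nonempty_Icc.mpr (le_max_right R δ)) (hcont.mono fun x hx => hδ.trans_le hx.1)
  have hm : 0 < S x₀ := hpos x₀ (hδ.trans_le hx₀.1)
  refine ⟨min (L / 2) (min (S x₀ / R' ^ n) c), by positivity, fun p hp => ?_⟩
  rcases le_or_gt p δ with hpδ | hδp
  · left
    calc _ ≤ L / 2 * p ^ n := by gcongr; exact min_le_left _ _
      _ ≤ S p := (le_div_iff₀ (by positivity)).mp (hδS ⟨hp, hpδ⟩)
  rcases le_or_gt p R' with hpR | hRp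
  · left
    calc _ ≤ S x₀ / R' ^ n * p ^ n := by
          gcongr; exact (min_le_right _ _).trans (min_le_left _ _)
      _ ≤ S x₀ := by
          rw [div_mul_eq_mul_div, div_le_iff₀ (by positivity)]; gcongr
      _ ≤ S p := hmin ⟨hδp.le, hpR⟩
  · right
    calc _ ≤ c * p := by gcongr; exact (min_le_right _ _).trans (min_le_right _ _)
      _ ≤ S p := hcR p ((le_max_left R δ).trans hRp.le)

theorem exp_neg_div_comp_rpow_inv_mul_le {S : ℝ → ℝ} {n : ℕ} {A ν u : ℝ} (hn : 1 ≤ n)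
    (hA : 0 ≤ A) (hS : ∀ p > 0, A * p ^ n ≤ S p ∨ A * p ≤ S p) (hν : ν ∈ Ioc 0 1)
    (hu : 0 < u) :
    exp (-S (ν ^ (n : ℝ)⁻¹ * u) / ν) ≤ exp (-(A * u ^ n)) + exp (-(A * u)) := by
  obtain ⟨hν0, hν1⟩ := hν
  set t := ν ^ (n : ℝ)⁻¹
  have ht : 0 < t := rpow_pos_of_pos hν0 _
  have htn : t ^ n = ν := rpow_inv_natCast_pow hν0.le (by omega)
  have hνt : ν ≤ t :=
    self_le_rpow_of_le_one hν0.le hν1 (inv_le_one_of_one_le₀ (by exact_mod_cast hn))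
  rw [neg_div]
  rcases hS (t * u) (mul_pos ht hu) with h | h
  · have : A * u ^ n ≤ S (t * u) / ν := by
      rw [le_div_iff₀ hν0, ← htn]
      calc A * u ^ n * t ^ n = A * (t * u) ^ n := by ring
        _ ≤ S (t * u) := h
    exact (exp_le_exp.mpr (neg_le_neg this)).trans (le_add_of_nonneg_right (exp_pos _).le)
  · have : A * u ≤ S (t * u) / ν := by
      rw [le_div_iff₀ hν0]
      calc A * u * ν ≤ A * u * t := by gcongr
        _ = A * (t * u) := by ring
        _ ≤ S (t * u) := h
    exact (exp_le_exp.mpr (neg_le_neg this)).trans (le_add_of_nonneg_left (exp_pos _).le)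

theorem tendsto_rpow_mul_nhdsGT_zero {r u : ℝ} (hr : 0 < r) (hu : 0 < u) :
    Tendsto (fun ν : ℝ => ν ^ r * u) (𝓝[>] 0) (𝓝[>] 0) := by
  refine tendsto_nhdsWithin_iff.mpr ⟨?_, ?_⟩
  · simpa [zero_rpow hr.ne'] using
      (((continuous_rpow_const hr.le).tendsto 0).mono_left nhdsWithin_le_nhds).mul_const u
  · exact eventually_mem_nhdsWithin.mono fun ν hν => mul_pos (rpow_pos_of_pos hν r) hu

theorem tendsto_div_comp_rpow_inv_mul {S : ℝ → ℝ} {n : ℕ} {L u : ℝ} (hn : n ≠ 0)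
    (hu : 0 < u) (hlim : Tendsto (fun p => S p / p ^ n) (𝓝[>] 0) (𝓝 L)) :
    Tendsto (fun ν => S (ν ^ (n : ℝ)⁻¹ * u) / ν) (𝓝[>] 0) (𝓝 (L * u ^ n)) := by
  have hscale := tendsto_rpow_mul_nhdsGT_zero (r := (n : ℝ)⁻¹) (by positivity) hu
  refine ((hlim.comp hscale).mul_const (u ^ n)).congr' ?_
  filter_upwards [self_mem_nhdsWithin] with ν (hν : 0 < ν)
  simp only [Function.comp_apply, mul_pow, rpow_inv_natCast_pow hν.le hn]
  field_simp

theorem integral_Ioi_rpow_mul_comp_mul_left (f : ℝ → ℝ) (q : ℝ) {t : ℝ} (ht : 0 < t) :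
    ∫ ξ in Ioi 0, ξ ^ q * f ξ = t ^ (q + 1) * ∫ u in Ioi 0, u ^ q * f (t * u) := by
  have h := integral_comp_mul_left_Ioi' (fun ξ => ξ ^ q * f ξ) 0 ht
  rw [mul_zero] at h
  rw [← h, smul_eq_mul, rpow_add_one ht.ne', mul_comm (t ^ q) t, mul_assoc,
    ← integral_const_mul (t ^ q)]
  congr 1
  refine setIntegral_congr_fun measurableSet_Ioi fun u (hu : 0 < u) => ?_
  rw [mul_rpow ht.le hu.le, mul_assoc]

theorem tendsto_setIntegral_rpow_mul_exp_neg_div_comp_rpow_inv_mul {S : ℝ → ℝ} {n : ℕ}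
    {L A q : ℝ} (hn : 1 ≤ n) (hcont : ContinuousOn S (Ioi 0))
    (hlim : Tendsto (fun p => S p / p ^ n) (𝓝[>] 0) (𝓝 L)) (hA : 0 < A)
    (hS : ∀ p > 0, A * p ^ n ≤ S p ∨ A * p ≤ S p) (hq : -1 < q) :
    Tendsto (fun ν => ∫ u in Ioi 0, u ^ q * exp (-S (ν ^ (n : ℝ)⁻¹ * u) / ν)) (𝓝[>] 0)
      (𝓝 (∫ u in Ioi 0, u ^ q * exp (-L * u ^ (n : ℝ)))) := by
  refine tendsto_integral_filter_of_dominated_convergence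
    (fun u => u ^ q * exp (-A * u ^ (n : ℝ)) + u ^ q * exp (-A * u ^ (1 : ℝ))) ?_ ?_
    ((integrableOn_rpow_mul_exp_neg_mul_rpow hq (by positivity) hA).add
      (integrableOn_rpow_mul_exp_neg_mul_rpow hq one_pos hA)) ?_
  · filter_upwards [self_mem_nhdsWithin] with ν (hν : 0 < ν)
    have hmaps : MapsTo (ν ^ (n : ℝ)⁻¹ * ·) (Ioi 0) (Ioi 0) :=
      fun u hu => mul_pos (rpow_pos_of_pos hν _) hu
    refine ContinuousOn.aestronglyMeasurable ?_ measurableSet_Ioi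
    exact (continuousOn_id.rpow_const fun u hu => Or.inl (ne_of_gt hu)).mul
      (continuous_exp.comp_continuousOn
        ((hcont.comp (continuousOn_const.mul continuousOn_id) hmaps).neg.div_const ν))
  · filter_upwards [Ioc_mem_nhdsGT_of_mem ⟨le_rfl, zero_lt_one⟩] with ν hν
    filter_upwards [ae_restrict_mem measurableSet_Ioi] with u (hu : 0 < u)
    rw [norm_of_nonneg (by positivity), ← mul_add]
    gcongr
    simpa only [rpow_natCast, rpow_one, neg_mul] using
      exp_neg_div_comp_rpow_inv_mul_le hn hA.le hS hν hu
  · filter_upwards [ae_restrict_mem measurableSet_Ioi] with u (hu : 0 < u)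
    have h := (continuous_exp.tendsto _).comp
      (tendsto_div_comp_rpow_inv_mul (by omega) hu hlim).neg
    simpa only [rpow_natCast, neg_mul, neg_div, Function.comp_def] using
      tendsto_const_nhds.mul h

noncomputable def laplaceMoment (S : ℝ → ℝ) (q ν : ℝ) : ℝ :=
  ∫ ξ in Ioi 0, ξ ^ q * exp (-S ξ / ν)

theorem tendsto_rpow_mul_laplaceMoment {S : ℝ → ℝ} {n : ℕ} {L c R q : ℝ} (hn : 1 ≤ n)
    (hcont : ContinuousOn S (Ioi 0)) (hpos : ∀ p, 0 < p → 0 < S p) (hL : 0 < L)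
    (hlim : Tendsto (fun p => S p / p ^ n) (𝓝[>] 0) (𝓝 L))
    (hc : 0 < c) (hcR : ∀ p ≥ R, c * p ≤ S p) (hq : -1 < q) :
    Tendsto (fun ν => ν ^ (-(q + 1) / n) * laplaceMoment S q ν) (𝓝[>] 0)
      (𝓝 (L ^ (-(q + 1) / n) * (1 / n) * Gamma ((q + 1) / n))) := by
  obtain ⟨A, hA, hS⟩ := exists_pos_mul_pow_le_or_mul_le hcont hpos hL hlim hc hcR
  rw [← integral_rpow_mul_exp_neg_mul_rpow (by positivity) hq hL]
  refine (tendsto_setIntegral_rpow_mul_exp_neg_div_comp_rpow_inv_mul hn hcont hlim hA hS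
    hq).congr' ?_
  filter_upwards [self_mem_nhdsWithin] with ν (hν : 0 < ν)
  rw [laplaceMoment, integral_Ioi_rpow_mul_comp_mul_left (fun ξ => exp (-S ξ / ν)) q
    (rpow_pos_of_pos hν (n : ℝ)⁻¹), ← mul_assoc, ← rpow_mul hν.le, ← rpow_add hν,
    show -(q + 1) / n + (n : ℝ)⁻¹ * (q + 1) = 0 by ring, rpow_zero, one_mul]

theorem rpow_neg_two_div_div_rpow_neg_one_div {x : ℝ} (hx : 0 < x) (a : ℝ) :
    x ^ (-2 / a) / x ^ (-1 / a) = x ^ (-a⁻¹) := by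
  rw [← rpow_sub hx]; ring_nf

theorem tendsto_rpow_mul_laplaceMoment_one_div_zero {S : ℝ → ℝ} {n : ℕ} {L c R : ℝ}
    (hn : 1 ≤ n) (hcont : ContinuousOn S (Ioi 0)) (hpos : ∀ p, 0 < p → 0 < S p) (hL : 0 < L)
    (hlim : Tendsto (fun p => S p / p ^ n) (𝓝[>] 0) (𝓝 L))
    (hc : 0 < c) (hcR : ∀ p ≥ R, c * p ≤ S p) :
    Tendsto (fun ν => ν ^ (-(n : ℝ)⁻¹) * (laplaceMoment S 1 ν / laplaceMoment S 0 ν))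
      (𝓝[>] 0) (𝓝 (L ^ (-(n : ℝ)⁻¹) * (Gamma (2 / n) / Gamma (1 / n)))) := by
  have hn' : (0 : ℝ) < n := by exact_mod_cast hn
  have hΓ : 0 < Gamma ((0 + 1) / n) := Gamma_pos_of_pos (by positivity)
  have hdiv := (tendsto_rpow_mul_laplaceMoment hn hcont hpos hL hlim hc hcR (q := 1)
    (by norm_num)).div (tendsto_rpow_mul_laplaceMoment hn hcont hpos hL hlim hc hcR (q := 0)
    (by norm_num)) (by positivity)
  rw [one_add_one_eq_two, zero_add, mul_div_mul_comm, mul_div_mul_right _ _ (by positivity),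
    rpow_neg_two_div_div_rpow_neg_one_div hL] at hdiv
  refine hdiv.congr' ?_
  filter_upwards [self_mem_nhdsWithin] with ν (hν : 0 < ν)
  rw [Pi.div_apply, mul_div_mul_comm, rpow_neg_two_div_div_rpow_neg_one_div hν]

/-- Cubic (spinodal) Laplace asymptotics: if the positive continuous phase S̃
satisfies S̃(p)/p³ → L ∈ (0,∞) as p → 0⁺ and grows at least linearly at infinity,
then the Laplace quotient p_ν = (∫₀^∞ e^{−S̃(ξ)/ν} ξ dξ)/(∫₀^∞ e^{−S̃(ξ)/ν} dξ)
satisfies ν^{−1/3}·p_ν → L^{−1/3}·Γ(2/3)/Γ(1/3) as ν → 0⁺. -/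
theorem laplace_quotient_cubic_scaling (S : ℝ → ℝ)
    (hcont : ContinuousOn S (Set.Ioi 0)) (hpos : ∀ p : ℝ, 0 < p → 0 < S p)
    (L : ℝ) (hL : 0 < L)
    (hlim : Filter.Tendsto (fun p : ℝ => S p / p ^ 3)
      (nhdsWithin 0 (Set.Ioi 0)) (nhds L))
    (hgrow : ∃ c > (0 : ℝ), ∃ R > (0 : ℝ), ∀ p ≥ R, c * p ≤ S p) :
    Filter.Tendsto
      (fun ν : ℝ => ν ^ (-(1 / 3) : ℝ) *
        ((∫ ξ in Set.Ioi (0 : ℝ), Real.exp (-S ξ / ν) * ξ) /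
          (∫ ξ in Set.Ioi (0 : ℝ), Real.exp (-S ξ / ν))))
      (nhdsWithin 0 (Set.Ioi 0))
      (nhds (L ^ (-(1 / 3) : ℝ) * (Real.Gamma (2 / 3) / Real.Gamma (1 / 3)))) := by
  obtain ⟨c, hc, R, -, hcR⟩ := hgrow
  have h := tendsto_rpow_mul_laplaceMoment_one_div_zero (n := 3) (by norm_num)
    hcont hpos hL hlim hc hcR
  simpa only [laplaceMoment, rpow_one, rpow_zero, mul_one, mul_comm _ (exp _), Nat.cast_ofNat,
    inv_eq_one_div] using h
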